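/- Let B be a finite skew left brace with B ≠ Ann(B), and let p be a prime. If Pb(B) = (2p - 1)/p² and p is the smallest prime dividing |B|, then [B : Ann(B)] = p (so B/Ann(B) is the trivial brace of order p, i.e., cyclic of order p with both operations equal). -/

import Mathlib

/-- A skew left brace structure on a type carrying both an additive and a
multiplicative group structure: the compatibility (skew left distributivity)
`a ∘ (b + c) = (a ∘ b) - a + (a ∘ c)` holds, and the two identities coincide. -/
class SkewBrace (B : Type*) [AddGroup B] [Group B] : Prop where
  compat : ∀ a b c : B, a * (b + c) = a * b + -a + a * c
  zero_eq_one : (0 : B) = 1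

section Defs

variable {B : Type*} [AddGroup B] [Group B]

/-- `λ_a(b) = -a + (a ∘ b)`. -/
def lambdaMap (a b : B) : B := -a + a * b

/-- `a * b := -a + (a ∘ b) - b` (the star product of a skew brace). -/
def starOp (a b : B) : B := -a + a * b + -b

/-- The additive commutator `[a,b]⁺ = a + b - a - b`. -/
def addComB (a b : B) : B := a + b + -a + -b

/-- The multiplicative commutator `[a,b]∘ = a ∘ b ∘ a⁻¹ ∘ b⁻¹`. -/
def mulComB (a b : B) : B := a * b * a⁻¹ * b⁻¹

/-- The brace centralizer `Cb_B(x) = {b | x*b = b*x = [x,b]⁺ = 1}`. -/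
def Cb (x : B) : Set B := {b | starOp x b = 0 ∧ starOp b x = 0 ∧ addComB x b = 0}

/-- The annihilator `Ann(B) = Ker λ ∩ Z(B,+) ∩ Z(B,∘)` as a set. -/
def AnnSet (B : Type*) [AddGroup B] [Group B] : Set B :=
  {a | (∀ b : B, a + b = a * b) ∧ (∀ b : B, a + b = b + a) ∧ (∀ b : B, a * b = b * a)}

/-- A sub-skew brace: a subset closed under both group operations and inverses. -/
def IsSubSkewBrace (H : Set B) : Prop :=
  (0 : B) ∈ H ∧ (∀ a ∈ H, ∀ b ∈ H, a + b ∈ H) ∧ (∀ a ∈ H, -a ∈ H) ∧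
    (∀ a ∈ H, ∀ b ∈ H, a * b ∈ H) ∧ (∀ a ∈ H, a⁻¹ ∈ H)

/-- The commuting probability of a (finite) skew brace. -/
noncomputable def Pb (B : Type*) [AddGroup B] [Group B] : ℚ :=
  (Nat.card {p : B × B //
      starOp p.1 p.2 = 0 ∧ starOp p.2 p.1 = 0 ∧ addComB p.1 p.2 = 0} : ℚ)
    / (Nat.card B : ℚ) ^ 2

/-- The commuting probability of a sub-skew brace `H` of `B`. -/
noncomputable def PbSub (H : Set B) : ℚ :=
  (Nat.card {p : B × B // p.1 ∈ H ∧ p.2 ∈ H ∧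
      starOp p.1 p.2 = 0 ∧ starOp p.2 p.1 = 0 ∧ addComB p.1 p.2 = 0} : ℚ)
    / (Nat.card H : ℚ) ^ 2

end Defs

set_option linter.unusedSectionVars false

namespace SB
variable {B : Type*} [AddGroup B] [Group B] [SkewBrace B]

lemma zero_eq_one : (0 : B) = 1 := SkewBrace.zero_eq_one

lemma mul_zero' (a : B) : a * (0 : B) = a := by
  have h := SkewBrace.compat a (0 : B) 0
  rw [add_zero] at h
  have h2 : a * 0 + 0 = a * 0 + (-a + a * 0) := by
    rw [add_zero, ← add_assoc]; exact h
  have h3 := (add_left_cancel h2).symm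
  exact (neg_add_eq_zero.mp h3).symm

lemma lam_add (a b c : B) : lambdaMap a (b + c) = lambdaMap a b + lambdaMap a c := by
  simp only [lambdaMap, SkewBrace.compat a b c, add_assoc]

/-- `lambdaMap a` as an additive homomorphism. -/
def lamHom (a : B) : B →+ B where
  toFun := lambdaMap a
  map_zero' := by simp [lambdaMap, mul_zero']
  map_add' := lam_add a

lemma mul_eq_add_lam (a b : B) : a * b = a + lambdaMap a b := by
  simp [lambdaMap, ← add_assoc]

lemma lam_one (b : B) : lambdaMap (1 : B) b = b := by
  simp [lambdaMap, ← zero_eq_one]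

lemma lam_mul (a b c : B) : lambdaMap (a * b) c = lambdaMap a (lambdaMap b c) := by
  have hneg : a * (-b) = a + -(a * b) + a := by
    have h := SkewBrace.compat a b (-b)
    rw [add_neg_cancel, mul_zero'] at h
    have : -(a*b) + a = -(a*b) + (a * b + -a + a * (-b)) := by rw [← h]
    rw [← add_assoc, ← add_assoc, neg_add_cancel, zero_add] at this
    have := congrArg (fun t => a + t) this
    simp only [← add_assoc, add_neg_cancel, zero_add] at this
    rw [← this]
  simp only [lambdaMap]
  rw [SkewBrace.compat a (-b) (b * c), hneg, mul_assoc]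
  simp only [← add_assoc]
  simp

lemma lam_inv_lam (a c : B) : lambdaMap a⁻¹ (lambdaMap a c) = c := by
  rw [← lam_mul, inv_mul_cancel, lam_one]

lemma lam_injective (a : B) : Function.Injective (lambdaMap a) := by
  intro x y h
  have := congrArg (lambdaMap a⁻¹) h
  rwa [lam_inv_lam, lam_inv_lam] at this

lemma lam_zsmul (a : B) (k : ℤ) (b : B) :
    lambdaMap a (k • b) = k • lambdaMap a b := map_zsmul (lamHom a) k b

lemma lam_neg (a b : B) : lambdaMap a (-b) = -lambdaMap a b := map_neg (lamHom a) b

lemma lam_self_inv (a : B) : lambdaMap a a⁻¹ = -a := by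
  have : a + lambdaMap a a⁻¹ = a * a⁻¹ := (mul_eq_add_lam a a⁻¹).symm
  rw [mul_inv_cancel, ← zero_eq_one] at this
  have := congrArg (fun t => -a + t) this
  simpa [← add_assoc] using this

lemma lam_eq_of {x b : B} (h : x * b = x + b) : lambdaMap x b = b := by
  rw [lambdaMap, h, neg_add_cancel_left]

lemma mul_of_lam {x b : B} (h : lambdaMap x b = b) : x * b = x + b := by
  rw [mul_eq_add_lam, h]

/- ### Annihilator -/

lemma zero_mem_ann : (0 : B) ∈ AnnSet B := by
  refine ⟨fun b => ?_, fun b => by rw [zero_add, add_zero], fun b => ?_⟩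
  · rw [zero_add, zero_eq_one, one_mul]
  · rw [zero_eq_one, one_mul, mul_one]

lemma ann_mul_mem {a b : B} (ha : a ∈ AnnSet B) (hb : b ∈ AnnSet B) :
    a * b ∈ AnnSet B := by
  have hab : a * b = a + b := (ha.1 b).symm
  refine ⟨fun c => ?_, fun c => ?_, fun c => ?_⟩
  · calc a * b + c = a + (b + c) := by rw [hab, add_assoc]
      _ = a + b * c := by rw [hb.1 c]
      _ = a * (b * c) := ha.1 _
      _ = a * b * c := (mul_assoc a b c).symm
  · calc a * b + c = a + (b + c) := by rw [hab, add_assoc]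
      _ = a + (c + b) := by rw [hb.2.1 c]
      _ = a + c + b := (add_assoc a c b).symm
      _ = c + a + b := by rw [ha.2.1 c]
      _ = c + (a + b) := add_assoc c a b
      _ = c + a * b := by rw [hab]
  · rw [mul_assoc, hb.2.2 c, ← mul_assoc, ha.2.2 c, mul_assoc]

lemma ann_neg_eq_inv {a : B} (ha : a ∈ AnnSet B) : -a = a⁻¹ := by
  have h : a + a⁻¹ = a * a⁻¹ := ha.1 a⁻¹
  rw [mul_inv_cancel, ← zero_eq_one] at h
  have := congrArg (fun t => -a + t) h
  have h2 : a⁻¹ = -a := by simpa [← add_assoc] using this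
  exact h2.symm

lemma ann_inv_mem {a : B} (ha : a ∈ AnnSet B) : a⁻¹ ∈ AnnSet B := by
  have hinv : a⁻¹ = -a := (ann_neg_eq_inv ha).symm
  refine ⟨fun b => ?_, fun b => ?_, fun b => ?_⟩
  · have h1 : a + a⁻¹ * b = b := by rw [ha.1 (a⁻¹ * b), ← mul_assoc, mul_inv_cancel, one_mul]
    have := congrArg (fun t => -a + t) h1
    simp only [← add_assoc, neg_add_cancel, zero_add] at this
    rw [this, hinv]
  · rw [hinv]
    exact (AddCommute.neg_left (ha.2.1 b)).eq
  · exact (Commute.inv_left (ha.2.2 b)).eq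

lemma ann_add_mem {a b : B} (ha : a ∈ AnnSet B) (hb : b ∈ AnnSet B) :
    a + b ∈ AnnSet B := by
  rw [ha.1 b]; exact ann_mul_mem ha hb

lemma ann_neg_mem {a : B} (ha : a ∈ AnnSet B) : -a ∈ AnnSet B := by
  rw [ann_neg_eq_inv ha]; exact ann_inv_mem ha

variable (B) in
/-- The annihilator as an additive subgroup. -/
def annAdd : AddSubgroup B where
  carrier := AnnSet B
  zero_mem' := zero_mem_ann
  add_mem' := ann_add_mem
  neg_mem' := ann_neg_mem

variable (B) in
/-- The annihilator as a multiplicative subgroup. -/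
def annMul : Subgroup B where
  carrier := AnnSet B
  one_mem' := by rw [← zero_eq_one]; exact zero_mem_ann
  mul_mem' := ann_mul_mem
  inv_mem' := ann_inv_mem

lemma lam_fix_ann (x : B) {a : B} (ha : a ∈ AnnSet B) : lambdaMap x a = a := by
  rw [lambdaMap, ← ha.2.2 x, ← ha.1 x, ha.2.1 x, neg_add_cancel_left]

lemma mem_ann_of_lam_mem {a b : B} (h : lambdaMap a b ∈ AnnSet B) : b ∈ AnnSet B := by
  have h2 := lam_fix_ann a⁻¹ h
  rw [lam_inv_lam] at h2
  rw [h2]; exact h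

/- ### The brace centralizer -/

lemma mem_cb_iff (x b : B) :
    b ∈ Cb x ↔ (x * b = x + b ∧ b * x = b + x ∧ x + b = b + x) := by
  have aux : ∀ u c v : B, (-u + c + -v = 0 ↔ c = u + v) := by
    intro u c v
    constructor
    · intro h
      have h1 := congrArg (fun t => t + v) h
      simp only [neg_add_cancel_right, zero_add] at h1
      have h2 := congrArg (fun t => u + t) h1
      simpa [← add_assoc] using h2
    · intro h
      rw [h]; simp [← add_assoc]
  have aux2 : (x + b + -x + -b = 0 ↔ x + b = b + x) := by
    constructor
    · intro h
      have h1 := congrArg (fun t => t + b) h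
      simp only [neg_add_cancel_right, zero_add] at h1
      have h2 := congrArg (fun t => t + x) h1
      simpa [neg_add_cancel_right] using h2
    · intro h
      rw [h]; simp [← add_assoc]
  simp only [Cb, starOp, addComB, Set.mem_setOf_eq]
  rw [aux, aux, aux2]

lemma ann_subset_cb (x : B) : AnnSet B ⊆ Cb x := by
  intro a ha
  rw [mem_cb_iff]
  exact ⟨(ha.2.2 x).symm.trans ((ha.1 x).symm.trans (ha.2.1 x)),
    (ha.1 x).symm, (ha.2.1 x).symm⟩

lemma mem_ann_of_cb_univ {x : B} (h : ∀ b : B, b ∈ Cb x) : x ∈ AnnSet B := by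
  refine ⟨fun b => ((mem_cb_iff x b).mp (h b)).1.symm, fun b => ((mem_cb_iff x b).mp (h b)).2.2,
    fun b => ?_⟩
  have hb := (mem_cb_iff x b).mp (h b)
  rw [hb.1, hb.2.1, hb.2.2]

/-- The brace centralizer as a subgroup of `(B, ∘)`. -/
def cbSub (x : B) : Subgroup B where
  carrier := Cb x
  one_mem' := ann_subset_cb x (zero_eq_one (B := B) ▸ zero_mem_ann)
  mul_mem' := by
    intro y z hy hz
    rw [mem_cb_iff] at hy hz ⊢
    obtain ⟨hy1, hy2, hy3⟩ := hy
    obtain ⟨hz1, hz2, hz3⟩ := hz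
    have lamxy := lam_eq_of hy1
    have lamxz := lam_eq_of hz1
    have lamyx := lam_eq_of hy2
    have commy : x * y = y * x := hy1.trans (hy3.trans hy2.symm)
    have commz : x * z = z * x := hz1.trans (hz3.trans hz2.symm)
    have key1 : lambdaMap x (y * z) = y * z := by
      rw [mul_eq_add_lam y z, lam_add, lamxy, ← lam_mul, commy, lam_mul, lamxz]
    have key2 : x + y * z = y * z + x := by
      have hcz : x + lambdaMap y z = lambdaMap y z + x := by
        have h1 : lambdaMap y (x + z) = lambdaMap y (z + x) := by rw [hz3]
        rw [lam_add, lam_add, lamyx] at h1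
        exact h1
      calc x + y * z = x + (y + lambdaMap y z) := by rw [mul_eq_add_lam]
        _ = x + y + lambdaMap y z := (add_assoc _ _ _).symm
        _ = y + x + lambdaMap y z := by rw [hy3]
        _ = y + (x + lambdaMap y z) := add_assoc _ _ _
        _ = y + (lambdaMap y z + x) := by rw [hcz]
        _ = y + lambdaMap y z + x := (add_assoc _ _ _).symm
        _ = y * z + x := by rw [← mul_eq_add_lam]
    have commyz : x * (y * z) = y * z * x := by
      rw [← mul_assoc, commy, mul_assoc, commz, ← mul_assoc]
    refine ⟨mul_of_lam key1, ?_, key2⟩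
    rw [← commyz, mul_of_lam key1, key2]
  inv_mem' := by
    intro y hy
    rw [mem_cb_iff] at hy ⊢
    obtain ⟨hy1, hy2, hy3⟩ := hy
    have lamxy := lam_eq_of hy1
    have lamyx := lam_eq_of hy2
    have commy : x * y = y * x := hy1.trans (hy3.trans hy2.symm)
    have lamfix : lambdaMap x y⁻¹ = y⁻¹ := by
      apply lam_injective y
      rw [← lam_mul, ← commy, lam_mul, lam_self_inv, lam_neg, lamxy, ← lam_self_inv]
    have lamyinvx : lambdaMap y⁻¹ x = x := by
      have h := lam_inv_lam y x
      rwa [lamyx] at h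
    have lamyinvy : lambdaMap y⁻¹ y = -y⁻¹ := by
      have := lam_self_inv y⁻¹
      rwa [inv_inv] at this
    have haddc : x + y⁻¹ = y⁻¹ + x := by
      have h1 : lambdaMap y⁻¹ (x + y) = lambdaMap y⁻¹ (y + x) := by rw [hy3]
      rw [lam_add, lam_add, lamyinvx, lamyinvy] at h1
      have hc : AddCommute x (-y⁻¹) := h1
      simpa using hc.neg_right.eq
    refine ⟨mul_of_lam lamfix, ?_, haddc⟩
    have hcm : Commute x y⁻¹ := (Commute.inv_right commy)
    rw [← hcm.eq, mul_of_lam lamfix, haddc]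

end SB

lemma mul_le_of_proper_dvd {p n d : ℕ} (hn : n ≠ 0) (hd : d ∣ n) (hdn : d ≠ n)
    (hmin : ∀ q : ℕ, q.Prime → q ∣ n → p ≤ q) : p * d ≤ n := by
  obtain ⟨e, he⟩ := hd
  have he0 : e ≠ 0 := by rintro rfl; rw [Nat.mul_zero] at he; exact hn he
  have he1 : e ≠ 1 := by rintro rfl; rw [Nat.mul_one] at he; exact hdn he.symm
  obtain ⟨q, hq, hqe⟩ := Nat.exists_prime_and_dvd he1
  have hqn : q ∣ n := he ▸ (hqe.mul_left d)
  have h2 : q ≤ e := Nat.le_of_dvd (Nat.pos_of_ne_zero he0) hqe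
  calc p * d ≤ e * d := Nat.mul_le_mul_right d ((hmin q hq hqn).trans h2)
    _ = n := by rw [he, Nat.mul_comm]

namespace SB
variable {B : Type*} [AddGroup B] [Group B] [SkewBrace B]
lemma cb_eq_univ_of_ann {x : B} (hx : x ∈ AnnSet B) : Cb x = Set.univ := by
  refine Set.eq_univ_of_forall fun b => ?_
  rw [mem_cb_iff]
  exact ⟨(hx.1 b).symm, (hx.2.2 b).symm.trans ((hx.1 b).symm.trans (hx.2.1 b)),
    hx.2.1 b⟩

end SB


open SB in
/-- If `B ≠ Ann(B)`, `Pb(B) = (2p-1)/p²` and `p` is the smallest prime dividing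
`|B|`, then `[B : Ann(B)] = p`, the quotient being the trivial brace of order
`p` (cyclic, with both operations coinciding). -/
theorem stmt9 {B : Type*} [AddGroup B] [Group B] [SkewBrace B] [Finite B]
    (hne : AnnSet B ≠ Set.univ) (p : ℕ) (hp : p.Prime)
    (hdvd : p ∣ Nat.card B)
    (hmin : ∀ q : ℕ, q.Prime → q ∣ Nat.card B → p ≤ q)
    (hPb : Pb B = (2 * (p : ℚ) - 1) / (p : ℚ) ^ 2) :
    Nat.card B = p * Nat.card (AnnSet B) ∧
    (∀ a b : B, -(a + b) + a * b ∈ AnnSet B) ∧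
    (∀ (N : Subgroup B), (N : Set B) = AnnSet B → ∀ [N.Normal],
      Nonempty ((B ⧸ N) ≃* Multiplicative (ZMod p))) := by
  classical
  haveI : Fintype B := Fintype.ofFinite B
  haveI := Fact.mk hp
  have hp2 : 2 ≤ p := hp.two_le
  set n := Nat.card B with hn
  have hnpos : 0 < n := Nat.card_pos
  set A := Nat.card (AnnSet B) with hA
  haveI : Nonempty (AnnSet B) := ⟨⟨0, zero_mem_ann⟩⟩
  have hApos : 0 < A := Nat.card_pos
  have hcarA : Nat.card (annMul B) = A := rfl
  have hcarAadd : Nat.card (annAdd B) = A := rfl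
  have hcard_cb : ∀ x : B, Nat.card (cbSub x) = Nat.card (Cb x) := fun _ => rfl
  -- per-element counts
  have hf_ann : ∀ x : B, x ∈ AnnSet B → Nat.card (Cb x) = n := by
    intro x hx
    rw [cb_eq_univ_of_ann hx, hn]
    exact Nat.card_congr (Equiv.Set.univ B)
  have hf_upper : ∀ x : B, x ∉ AnnSet B → p * Nat.card (Cb x) ≤ n := by
    intro x hx
    have hd : Nat.card (Cb x) ∣ n := (hcard_cb x) ▸ Subgroup.card_subgroup_dvd_card (cbSub x)
    have hne_top : Nat.card (Cb x) ≠ n := by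
      intro hEq
      have htop : cbSub x = ⊤ := Subgroup.eq_top_of_card_eq _ ((hcard_cb x).trans hEq)
      exact hx (mem_ann_of_cb_univ fun b => (htop ▸ Subgroup.mem_top b : b ∈ cbSub x))
    exact mul_le_of_proper_dvd hnpos.ne' hd hne_top hmin
  have hf_lower : ∀ x : B, A ≤ Nat.card (Cb x) := by
    intro x
    rw [hA, Nat.card_coe_set_eq, Nat.card_coe_set_eq]
    exact Set.ncard_le_ncard (ann_subset_cb x) (Set.toFinite _)
  -- the total count as a sum
  have hS : Nat.card {q : B × B //
      starOp q.1 q.2 = 0 ∧ starOp q.2 q.1 = 0 ∧ addComB q.1 q.2 = 0}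
      = ∑ x : B, Nat.card (Cb x) := by
    rw [Nat.card_congr (Equiv.subtypeProdEquivSigmaSubtype
      (fun a b : B => starOp a b = 0 ∧ starOp b a = 0 ∧ addComB a b = 0))]
    rw [Nat.card_eq_fintype_card, Fintype.card_sigma]
    exact Finset.sum_congr rfl fun x _ => (Nat.card_eq_fintype_card).symm
  set T := Finset.univ.filter (fun x : B => x ∈ AnnSet B) with hT
  set T' := Finset.univ.filter (fun x : B => ¬ x ∈ AnnSet B) with hT'
  have hTcard : T.card = A := by
    rw [hA, Nat.card_coe_set_eq, Set.ncard_eq_toFinset_card']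
    congr 1
    ext b
    simp [hT, Set.mem_toFinset]
  have hsplit : (∑ x ∈ T, Nat.card (Cb x)) + (∑ x ∈ T', Nat.card (Cb x))
      = ∑ x : B, Nat.card (Cb x) :=
    Finset.sum_filter_add_sum_filter_not _ _ _
  have hTsum : ∑ x ∈ T, Nat.card (Cb x) = A * n := by
    rw [Finset.sum_congr rfl (fun x hx => hf_ann x (by simpa [hT] using hx)),
      Finset.sum_const, smul_eq_mul, hTcard]
  have hT'bound : p * ∑ x ∈ T', Nat.card (Cb x) ≤ T'.card * n := by
    rw [Finset.mul_sum]
    calc ∑ x ∈ T', p * Nat.card (Cb x) ≤ ∑ _x ∈ T', n :=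
          Finset.sum_le_sum fun x hx => hf_upper x (by simpa [hT'] using hx)
      _ = T'.card * n := by rw [Finset.sum_const, smul_eq_mul]
  have hTT' : T.card + T'.card = n := by
    have h := Finset.card_filter_add_card_filter_not
      (s := (Finset.univ : Finset B)) (fun x : B => x ∈ AnnSet B)
    rw [Finset.card_univ, ← Nat.card_eq_fintype_card] at h
    exact h
  -- the annihilator is a proper subgroup
  have hAnn_ne : A ≠ n := by
    intro hEq
    have htop : annMul B = ⊤ := Subgroup.eq_top_of_card_eq _ (hcarA.trans hEq)
    exact hne (Set.eq_univ_of_forall fun b => (htop ▸ Subgroup.mem_top b : b ∈ annMul B))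
  have hAd : A ∣ n := hcarA ▸ Subgroup.card_subgroup_dvd_card (annMul B)
  have hpA : p * A ≤ n := mul_le_of_proper_dvd hnpos.ne' hAd hAnn_ne hmin
  -- the probability equation
  have hq : ((∑ x : B, Nat.card (Cb x) : ℕ) : ℚ) * p^2 = (2*p - 1) * n^2 := by
    rw [Pb] at hPb
    rw [div_eq_div_iff (by positivity) (by positivity)] at hPb
    rw [← hS]
    exact_mod_cast hPb
  have hmain : n = p * A := by
    refine le_antisymm ?_ hpA
    set S2 := ∑ x ∈ T', Nat.card (Cb x) with hS2
    have h1 : ((A:ℚ) * n + S2) * p^2 = (2*p - 1) * n^2 := by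
      rw [← hq, ← hsplit, hTsum]
      push_cast
      ring
    have h2 : (p:ℚ) * S2 ≤ T'.card * n := by exact_mod_cast hT'bound
    have h3 : (A:ℚ) + T'.card = n := by
      rw [← hTcard]; exact_mod_cast hTT'
    have hpQ : (2:ℚ) ≤ p := by exact_mod_cast hp2
    have hnQ : (0:ℚ) < n := by exact_mod_cast hnpos
    have hS2nn : (0:ℚ) ≤ S2 := by positivity
    have h4 : (p:ℚ) * ((p:ℚ) * S2) ≤ (p:ℚ) * (((n:ℚ) - A) * n) := by
      have hC : (T'.card : ℚ) = (n:ℚ) - A := by linarith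
      rw [← hC]
      exact mul_le_mul_of_nonneg_left h2 (by linarith)
    have h5 : (((p:ℚ) - 1) * n) * n ≤ (((p:ℚ) - 1) * n) * ((p:ℚ) * A) := by nlinarith [h4, h1]
    have hpos : (0:ℚ) < ((p:ℚ) - 1) * n := by nlinarith
    have hgoal : (n:ℚ) ≤ p * A := (mul_le_mul_iff_right₀ hpos).mp h5
    exact_mod_cast hgoal
  -- Part 2 preparation: the additive quotient has exponent p
  haveI hNorm : (annAdd B).Normal := by
    constructor
    intro a ha g
    have ha' : a ∈ AnnSet B := ha
    have h1 : g + a + -g = a + g + -g := by rw [ha'.2.1 g]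
    rw [add_neg_cancel_right] at h1
    rw [h1]; exact ha
  have hquot_card : Nat.card (B ⧸ annAdd B) = p := by
    have h2 := AddSubgroup.card_eq_card_quotient_mul_card_addSubgroup (annAdd B)
    rw [hcarAadd, ← hn, hmain] at h2
    exact (Nat.eq_of_mul_eq_mul_right hApos h2).symm
  have hexp : ∀ b : B, (p : ℤ) • b ∈ AnnSet B := by
    intro b
    have h0 : p • ((QuotientAddGroup.mk' (annAdd B)) b) = 0 := by
      rw [← hquot_card]; exact card_nsmul_eq_zero'
    have h1 : (QuotientAddGroup.mk' (annAdd B)) (p • b) = 0 := by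
      rw [map_nsmul]; exact h0
    have h3 : p • b ∈ annAdd B := (QuotientAddGroup.eq_zero_iff _).mp h1
    rw [natCast_zsmul]; exact h3
  have hsmul_ann : ∀ (b : B) (t : ℤ), ((p:ℤ) ∣ t) → t • b ∈ AnnSet B := by
    rintro b t ⟨u, rfl⟩
    rw [mul_zsmul]
    exact hexp (u • b)
  have hdvd_of : ∀ (b : B) (k : ℤ), k • b ∈ AnnSet B → ¬ ((p:ℤ) ∣ k) → b ∈ AnnSet B := by
    intro b k hk hndvd
    have hcop : IsCoprime (p:ℤ) k := by
      rw [Int.isCoprime_iff_gcd_eq_one]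
      have hnd : ¬ (p ∣ k.natAbs) := by
        intro h
        exact hndvd (Int.dvd_natAbs.mp (Int.natCast_dvd_natCast.mpr h))
      have h2 := (Nat.Prime.coprime_iff_not_dvd hp).mpr hnd
      simpa [Int.gcd, Int.natAbs_natCast] using h2
    obtain ⟨u, v, huv⟩ := hcop
    have hb : b = (u * p + v * k) • b := by rw [huv, one_zsmul]
    rw [hb, add_zsmul, mul_zsmul, mul_zsmul]
    exact ann_add_mem ((annAdd B).zsmul_mem (hexp b) u) ((annAdd B).zsmul_mem hk v)
  obtain ⟨b0, hb0⟩ : ∃ b : B, b ∉ AnnSet B := by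
    by_contra h
    push_neg at h
    exact hne (Set.eq_univ_of_forall h)
  have hgen : ∀ c : B, ∃ z ∈ AnnSet B, ∃ k : ℤ, c = z + k • b0 := by
    let sb : AddSubgroup B := {
      carrier := {c | ∃ z ∈ AnnSet B, ∃ k : ℤ, c = z + k • b0}
      zero_mem' := ⟨0, zero_mem_ann, 0, by simp⟩
      add_mem' := by
        rintro c1 c2 ⟨z1, hz1, k1, rfl⟩ ⟨z2, hz2, k2, rfl⟩
        refine ⟨z1 + z2, ann_add_mem hz1 hz2, k1 + k2, ?_⟩
        calc z1 + k1 • b0 + (z2 + k2 • b0) = z1 + (k1 • b0 + z2) + k2 • b0 := by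
              simp only [add_assoc]
          _ = z1 + (z2 + k1 • b0) + k2 • b0 := by rw [← hz2.2.1 (k1 • b0)]
          _ = z1 + z2 + (k1 + k2) • b0 := by rw [add_zsmul]; simp only [add_assoc]
      neg_mem' := by
        rintro c ⟨z, hz, k, rfl⟩
        refine ⟨-z, ann_neg_mem hz, -k, ?_⟩
        rw [neg_add_rev, neg_zsmul, ((ann_neg_mem hz).2.1 (-(k • b0))).symm]
    }
    intro c
    have hsb_dvd : Nat.card sb ∣ n := by
      rw [hn]; exact AddSubgroup.card_addSubgroup_dvd_card sb
    have hle : annAdd B ≤ sb := fun a ha => ⟨a, ha, 0, by simp⟩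
    have hAdvd : A ∣ Nat.card sb := hcarAadd ▸ AddSubgroup.card_dvd_of_le hle
    obtain ⟨k, hk⟩ := hAdvd
    have hkdvd : k ∣ p := by
      have h9 : A * k ∣ A * p := by
        rw [← hk, Nat.mul_comm A p, ← hmain]
        exact hsb_dvd
      exact (Nat.mul_dvd_mul_iff_left hApos).mp h9
    have hcardsb : Nat.card sb = n := by
      rcases hp.eq_one_or_self_of_dvd k hkdvd with h1 | h1
      · exfalso
        have hsub : AnnSet B ⊆ (sb : Set B) := hle
        have hle2 : ((sb : Set B)).ncard ≤ (AnnSet B).ncard := by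
          rw [← Nat.card_coe_set_eq, ← Nat.card_coe_set_eq]
          have h10 : Nat.card (sb : Set B) = A := by
            rw [h1, Nat.mul_one] at hk
            exact hk
          rw [h10]
        have heq := Set.eq_of_subset_of_ncard_le hsub hle2 (Set.toFinite _)
        have hb0mem : b0 ∈ (sb : Set B) := ⟨0, zero_mem_ann, 1, by simp⟩
        rw [← heq] at hb0mem
        exact hb0 hb0mem
      · rw [hk, h1, hmain, Nat.mul_comm]
    have hctop : c ∈ sb := by
      have htop : sb = ⊤ := AddSubgroup.eq_top_of_card_eq sb (by rw [hcardsb, hn])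
      rw [htop]
      exact AddSubgroup.mem_top c
    exact hctop
  have hppos : 0 < p - 1 := by omega
  have hcop : Nat.gcd n (p - 1) = 1 := by
    by_contra h
    obtain ⟨q, hq, hqd⟩ := Nat.exists_prime_and_dvd h
    have hq1 : q ∣ n := hqd.trans (Nat.gcd_dvd_left _ _)
    have hq2 : q ∣ p - 1 := hqd.trans (Nat.gcd_dvd_right _ _)
    have h11 := hmin q hq hq1
    have h12 := Nat.le_of_dvd hppos hq2
    omega
  have key : ∀ a c : B, lambdaMap a c + -c ∈ AnnSet B := by
    intro a c
    obtain ⟨z0, hz0, m, hm⟩ := hgen (lambdaMap a b0)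
    have hpm : ¬ ((p:ℤ) ∣ m) := by
      intro hd2
      apply hb0
      apply mem_ann_of_lam_mem (a := a)
      rw [hm]
      exact ann_add_mem hz0 (hsmul_ann b0 m hd2)
    have hiter : ∀ j : ℕ, ∃ z ∈ AnnSet B, lambdaMap (a ^ j) b0 = z + (m ^ j) • b0 := by
      intro j
      induction j with
      | zero =>
        refine ⟨0, zero_mem_ann, ?_⟩
        rw [pow_zero, lam_one, pow_zero, one_zsmul, zero_add]
      | succ j ih =>
        obtain ⟨z, hz, hzeq⟩ := ih
        refine ⟨z + m ^ j • z0, ann_add_mem hz ((annAdd B).zsmul_mem hz0 (m ^ j)), ?_⟩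
        calc lambdaMap (a ^ (j+1)) b0 = lambdaMap a (lambdaMap (a ^ j) b0) := by
              rw [pow_succ', lam_mul]
          _ = lambdaMap a z + lambdaMap a (m ^ j • b0) := by rw [hzeq, lam_add]
          _ = z + m ^ j • lambdaMap a b0 := by rw [lam_fix_ann a hz, lam_zsmul]
          _ = z + (m ^ j • z0 + m ^ j • (m • b0)) := by
              rw [hm, AddCommute.zsmul_add (hz0.2.1 (m • b0)) (m ^ j)]
          _ = z + m ^ j • z0 + m ^ (j+1) • b0 := by
              rw [← mul_zsmul, ← pow_succ, add_assoc]
    obtain ⟨z1, hz1, hzn⟩ := hiter n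
    have hpow1 : a ^ n = 1 := by rw [hn]; exact pow_card_eq_one'
    rw [hpow1, lam_one] at hzn
    have hmem1 : (1 - m ^ n) • b0 ∈ AnnSet B := by
      have h6 := congrArg (fun t => t + -(m ^ n • b0)) hzn
      simp only [add_neg_cancel_right] at h6
      rw [sub_zsmul, one_zsmul, h6]
      exact hz1
    have hdp : (p:ℤ) ∣ 1 - m ^ n := by
      by_contra h
      exact hb0 (hdvd_of b0 _ hmem1 h)
    have hu0 : ((m : ZMod p)) ≠ 0 := by
      intro h
      exact hpm ((ZMod.intCast_zmod_eq_zero_iff_dvd m p).mp h)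
    have hun : ((m : ZMod p)) ^ n = 1 := by
      have h13 : ((1 - m ^ n : ℤ) : ZMod p) = 0 := (ZMod.intCast_zmod_eq_zero_iff_dvd _ p).mpr hdp
      push_cast at h13
      linear_combination -h13
    have hup : ((m : ZMod p)) ^ (p - 1) = 1 := ZMod.pow_card_sub_one_eq_one hu0
    have hord : orderOf ((m : ZMod p)) ∣ Nat.gcd n (p - 1) :=
      Nat.dvd_gcd (orderOf_dvd_of_pow_eq_one hun) (orderOf_dvd_of_pow_eq_one hup)
    rw [hcop, Nat.dvd_one] at hord
    have hm1 : ((m : ZMod p)) = 1 := orderOf_eq_one_iff.mp hord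
    have hdm : (p:ℤ) ∣ m - 1 := by
      rw [← ZMod.intCast_zmod_eq_zero_iff_dvd]
      push_cast
      rw [hm1]
      ring
    have hw : lambdaMap a b0 + -b0 ∈ AnnSet B := by
      have h7 : lambdaMap a b0 + -b0 = z0 + (m - 1) • b0 := by
        rw [hm, sub_zsmul, one_zsmul, add_assoc]
      rw [h7]
      exact ann_add_mem hz0 (hsmul_ann b0 _ hdm)
    obtain ⟨z, hz, k, hc⟩ := hgen c
    set w := lambdaMap a b0 + -b0 with hwdef
    have hwb : lambdaMap a b0 = w + b0 := by rw [hwdef, neg_add_cancel_right]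
    have hkw : (k • w) ∈ AnnSet B := (annAdd B).zsmul_mem hw k
    have hlam : lambdaMap a c = z + (k • w + k • b0) := by
      rw [hc, lam_add, lam_fix_ann a hz, lam_zsmul, hwb,
        AddCommute.zsmul_add (hw.2.1 b0) k]
    rw [hlam, hc]
    have h14 : z + (k • w + k • b0) + -(z + k • b0) = k • w := by
      rw [neg_add_rev]
      calc z + (k • w + k • b0) + (-(k • b0) + -z)
          = z + (k • w + (k • b0 + -(k • b0))) + -z := by simp only [add_assoc]
        _ = z + k • w + -z := by rw [add_neg_cancel, add_zero]
        _ = z + (-z + k • w) := by rw [add_assoc, hkw.2.1 (-z)]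
        _ = k • w := by rw [← add_assoc, add_neg_cancel, zero_add]
    rw [h14]
    exact hkw
  have part2 : ∀ a b : B, -(a + b) + a * b ∈ AnnSet B := by
    intro a b
    have hw := key a b
    set w := lambdaMap a b + -b with hwdef
    have hwb : lambdaMap a b = w + b := by rw [hwdef, neg_add_cancel_right]
    have heq : -(a + b) + a * b = w := by
      rw [mul_eq_add_lam, hwb, neg_add_rev]
      calc -b + -a + (a + (w + b)) = -b + (-a + (a + (w + b))) := add_assoc _ _ _
        _ = -b + (w + b) := by rw [neg_add_cancel_left]
        _ = -b + w + b := (add_assoc _ _ _).symm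
        _ = w + -b + b := by rw [← hw.2.1 (-b)]
        _ = w := by rw [add_assoc, neg_add_cancel, add_zero]
    rw [heq]
    exact hw
  refine ⟨hmain, part2, ?_⟩
  intro N hNs
  intro _inst
  have hcardN : Nat.card N = A := by
    rw [hA]
    exact Nat.card_congr (Equiv.setCongr hNs)
  have hqcard : Nat.card (B ⧸ N) = p := by
    have h2 := Subgroup.card_eq_card_quotient_mul_card_subgroup N
    rw [hcardN, ← hn, hmain] at h2
    exact (Nat.eq_of_mul_eq_mul_right hApos h2).symm
  have hzcard : Nat.card (Multiplicative (ZMod p)) = p := by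
    rw [Nat.card_congr (Multiplicative.toAdd (α := ZMod p)), Nat.card_zmod]
  exact ⟨mulEquivOfPrimeCardEq hqcard hzcard⟩
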